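/- On ℝ³ with coordinates (t,q₁,q₂), define the (1,1) tensor field (matrix field acting on the q-components, annihilating dt as stipulated) with components R¹₁ = R²₂ = t·q₁, R¹₂ = q₂, R²₁ = t·q₂, R¹₀ = q₁² + ½ t⁻¹ q₂², R²₀ = (3/2) q₁ q₂, R⁰₀ = R⁰₁ = R⁰₂ = 0, valid on the domain t > 0. Then R satisfies the torsion equations Σ_k R^i_k (∂R^k_0/∂q_j − ∂R^k_j/∂t) = Σ_k ( R^k_j ∂R^i_0/∂q_k − R^k_0 ∂R^i_j/∂q_k ) for i,j ∈ {1,2}, and the purely spatial Nijenhuis components Σ_k ( R^k_j ∂R^i_l/∂q_k − R^k_l ∂R^i_j/∂q_k + R^i_k ∂R^k_j/∂q_l − R^i_k ∂R^k_l/∂q_j ) vanish for all i,j,l ∈ {1,2}. -/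

import Mathlib

noncomputable section

/-- The spatial components `R^i_j` of the tensor (6.4) of the example, as
functions of `(t, q₁, q₂)`. -/
def Rspat : Fin 2 → Fin 2 → ℝ × ℝ × ℝ → ℝ :=
  ![![fun x => x.1 * x.2.1, fun x => x.2.2],
    ![fun x => x.1 * x.2.2, fun x => x.1 * x.2.1]]

/-- The time components `R^i_0` of the tensor (6.4). -/
def Rtime : Fin 2 → ℝ × ℝ × ℝ → ℝ :=
  ![fun x => x.2.1 ^ 2 + (1 / 2) * x.1⁻¹ * x.2.2 ^ 2,
    fun x => (3 / 2) * x.2.1 * x.2.2]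

/-- The coordinate direction `∂/∂t`. -/
def et : ℝ × ℝ × ℝ := (1, 0, 0)

/-- The coordinate directions `∂/∂q₁`, `∂/∂q₂`. -/
def eq' : Fin 2 → ℝ × ℝ × ℝ := ![(0, 1, 0), (0, 0, 1)]

/-- Partial derivative in direction `v`. -/
def pd (f : ℝ × ℝ × ℝ → ℝ) (x v : ℝ × ℝ × ℝ) : ℝ := fderiv ℝ f x v

theorem pd_of_hasFDerivAt {f : ℝ × ℝ × ℝ → ℝ} {L : ℝ × ℝ × ℝ →L[ℝ] ℝ} {x : ℝ × ℝ × ℝ}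
    (h : HasFDerivAt f L x) (v : ℝ × ℝ × ℝ) : pd f x v = L v := by
  rw [pd, h.fderiv]

theorem pd_Rspat (i j : Fin 2) (x v : ℝ × ℝ × ℝ) :
    pd (Rspat i j) x v =
      ![![v.1 * x.2.1 + x.1 * v.2.1, v.2.2],
        ![v.1 * x.2.2 + x.1 * v.2.2, v.1 * x.2.1 + x.1 * v.2.1]] i j := by
  have dt := hasFDerivAt_fst (𝕜 := ℝ) (p := x)
  have dq₁ := (hasFDerivAt_snd (𝕜 := ℝ) (p := x)).fst
  have dq₂ := (hasFDerivAt_snd (𝕜 := ℝ) (p := x)).snd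
  fin_cases i <;> fin_cases j <;> simp only [Rspat, Fin.zero_eta, Fin.mk_one, Fin.isValue,
    Matrix.cons_val_zero, Matrix.cons_val_one]
  · rw [pd_of_hasFDerivAt (dt.fun_mul dq₁)]; simp; ring
  · rw [pd_of_hasFDerivAt dq₂]; simp
  · rw [pd_of_hasFDerivAt (dt.fun_mul dq₂)]; simp; ring
  · rw [pd_of_hasFDerivAt (dt.fun_mul dq₁)]; simp; ring

theorem pd_Rtime (i : Fin 2) {x : ℝ × ℝ × ℝ} (ht : x.1 ≠ 0) (v : ℝ × ℝ × ℝ) :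
    pd (Rtime i) x v =
      ![2 * x.2.1 * v.2.1 - v.1 * x.2.2 ^ 2 / (2 * x.1 ^ 2) + x.2.2 * v.2.2 / x.1,
        3 / 2 * (v.2.1 * x.2.2 + x.2.1 * v.2.2)] i := by
  have dt := hasFDerivAt_fst (𝕜 := ℝ) (p := x)
  have dq₁ := (hasFDerivAt_snd (𝕜 := ℝ) (p := x)).fst
  have dq₂ := (hasFDerivAt_snd (𝕜 := ℝ) (p := x)).snd
  fin_cases i <;> simp only [Rtime, Fin.zero_eta, Fin.mk_one, Fin.isValue,
    Matrix.cons_val_zero, Matrix.cons_val_one]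
  · have dinv : HasFDerivAt (fun y : ℝ × ℝ × ℝ => y.1⁻¹) _ x := (hasFDerivAt_inv ht).comp x dt
    rw [pd_of_hasFDerivAt ((dq₁.pow 2).fun_add ((dinv.const_mul (1 / 2)).fun_mul (dq₂.pow 2)))]
    simp; field_simp; ring
  · rw [pd_of_hasFDerivAt ((dq₁.const_mul (3 / 2)).fun_mul dq₂)]; simp; ring

theorem mixed_torsion_eq (i j : Fin 2) {x : ℝ × ℝ × ℝ} (ht : x.1 ≠ 0) :
    ∑ k, Rspat i k x * (pd (Rtime k) x (eq' j) - pd (Rspat k j) x et)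
      = ∑ k, (Rspat k j x * pd (Rtime i) x (eq' k) - Rtime k x * pd (Rspat i j) x (eq' k)) := by
  fin_cases i <;> fin_cases j <;>
    simp only [Fin.sum_univ_two, pd_Rspat, pd_Rtime _ ht] <;>
    simp only [Rspat, Rtime, eq', et, Fin.zero_eta, Fin.mk_one, Fin.isValue,
      Matrix.cons_val_zero, Matrix.cons_val_one] <;>
    field_simp <;> ring

theorem spatial_nijenhuis_eq_zero (i j l : Fin 2) (x : ℝ × ℝ × ℝ) :
    ∑ k, (Rspat k j x * pd (Rspat i l) x (eq' k) - Rspat k l x * pd (Rspat i j) x (eq' k)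
      + Rspat i k x * pd (Rspat k j) x (eq' l) - Rspat i k x * pd (Rspat k l) x (eq' j)) = 0 := by
  fin_cases i <;> fin_cases j <;> fin_cases l <;>
    simp only [Fin.sum_univ_two, pd_Rspat] <;>
    simp only [Rspat, eq', Fin.zero_eta, Fin.mk_one, Fin.isValue, Matrix.cons_val_zero,
      Matrix.cons_val_one] <;>
    ring

/-- The tensor (6.4) of the example has vanishing Nijenhuis torsion on the
domain `t > 0`: both the mixed torsion equations involving `R^i_0` and the
purely spatial Nijenhuis components hold. -/
theorem example_tensor_nijenhuis_zero (x : ℝ × ℝ × ℝ) (ht : 0 < x.1) :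
    (∀ i j : Fin 2,
        ∑ k, Rspat i k x * (pd (Rtime k) x (eq' j) - pd (Rspat k j) x et)
          = ∑ k, (Rspat k j x * pd (Rtime i) x (eq' k)
              - Rtime k x * pd (Rspat i j) x (eq' k)))
    ∧ (∀ i j l : Fin 2,
        ∑ k, (Rspat k j x * pd (Rspat i l) x (eq' k)
            - Rspat k l x * pd (Rspat i j) x (eq' k)
            + Rspat i k x * pd (Rspat k j) x (eq' l)
            - Rspat i k x * pd (Rspat k l) x (eq' j)) = 0) :=
  ⟨fun i j => mixed_torsion_eq i j ht.ne', fun i j l => spatial_nijenhuis_eq_zero i j l x⟩
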